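/- Let G be a graph on n ≥ 4 vertices obtained from a simple star (center v_1 adjacent to all other vertices) by adding a single additional edge between two non-central vertices, with positive real edge weights. Then the distance matrix D(G) has exactly 1 positive eigenvalue and n−1 negative eigenvalues, i.e., its inertia is (1, 0, n−1); in particular D(G) is strongly unipositive. -/

import Mathlib

open Matrix

/-- Number of positive eigenvalues (with multiplicity) of a real symmetric matrix. -/
noncomputable def posEig {n : ℕ} {A : Matrix (Fin n) (Fin n) ℝ} (hA : A.IsHermitian) : ℕ :=
  Nat.card {i : Fin n // 0 < hA.eigenvalues i}

noncomputable def zeroEig {n : ℕ} {A : Matrix (Fin n) (Fin n) ℝ} (hA : A.IsHermitian) : ℕ :=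
  Nat.card {i : Fin n // hA.eigenvalues i = 0}

noncomputable def negEig {n : ℕ} {A : Matrix (Fin n) (Fin n) ℝ} (hA : A.IsHermitian) : ℕ :=
  Nat.card {i : Fin n // hA.eigenvalues i < 0}

/-- Total weight of a walk: sum of weights of its edges. -/
noncomputable def walkWeight {V : Type*} {G : SimpleGraph V} (w : Sym2 V → ℝ)
    {u v : V} (p : G.Walk u v) : ℝ :=
  (p.edges.map w).sum

/-- Weighted shortest-path distance. -/
noncomputable def wdist {V : Type*} (G : SimpleGraph V) (w : Sym2 V → ℝ) (u v : V) : ℝ :=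
  sInf {x | ∃ p : G.Walk u v, walkWeight w p = x}

/-- The distance matrix of a weighted graph on `Fin n`. -/
noncomputable def distMatrix {n : ℕ} (G : SimpleGraph (Fin n)) (w : Sym2 (Fin n) → ℝ) :
    Matrix (Fin n) (Fin n) ℝ :=
  Matrix.of fun i j => wdist G w i j

/-!
Let `rᵢ` be the distance from the center and `δ` the distance between `a` and `b`. Then
`d(i, j) = rᵢ + rⱼ` for every pair `i ≠ j` except `{a, b}`, so on the hyperplane `∑ xᵢ = 0` the
rank-two part `rᵢ + rⱼ` drops out of the quadratic form and
`xᵀ D x = -2 (∑ rᵢ xᵢ² + (r_a + r_b - δ) x_a x_b)`.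
Since `r_a, r_b, δ` satisfy the triangle inequality, `(r_a + r_b - δ)² < 4 r_a r_b`, so this is
negative definite there: `D` has at least `n - 1` negative eigenvalues. As `tr D = 0` and
`D ≠ 0`, the remaining eigenvalue is positive.
-/

namespace Matrix.IsHermitian

variable {ι : Type*} [Fintype ι] [DecidableEq ι] {A : Matrix ι ι ℝ}

lemma dotProduct_mulVec_eq_sum_eigenvalues (hA : A.IsHermitian) (x : ι → ℝ) :
    x ⬝ᵥ A *ᵥ x =
      ∑ i, hA.eigenvalues i * ((star (hA.eigenvectorUnitary : Matrix ι ι ℝ) *ᵥ x) i) ^ 2 := by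
  have hUx : x ᵥ* (hA.eigenvectorUnitary : Matrix ι ι ℝ) =
      star (hA.eigenvectorUnitary : Matrix ι ι ℝ) *ᵥ x := by
    rw [star_eq_conjTranspose, conjTranspose_eq_transpose_of_trivial, mulVec_transpose]
  conv_lhs => rw [hA.spectral_theorem, Unitary.conjStarAlgAut_apply]
  rw [← mulVec_mulVec, ← mulVec_mulVec, dotProduct_mulVec, hUx]
  simp [mulVec_diagonal, dotProduct, pow_two, mul_left_comm]

end Matrix.IsHermitian

section Inertia

variable {n : ℕ} {A : Matrix (Fin n) (Fin n) ℝ} (hA : A.IsHermitian)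

lemma posEig_add_zeroEig_add_negEig : posEig hA + zeroEig hA + negEig hA = n := by
  simp only [posEig, zeroEig, negEig, Nat.card_eq_fintype_card, Fintype.card_subtype,
    Finset.card_filter, ← Finset.sum_add_distrib]
  conv_rhs => rw [← Fintype.card_fin n, Fintype.card, Finset.card_eq_sum_ones]
  refine Finset.sum_congr rfl fun i _ => ?_
  rcases lt_trichotomy (hA.eigenvalues i) 0 with h | h | h
  · simp [h, h.ne, h.not_gt]
  · simp [h]
  · simp [h, h.ne', h.not_gt]

lemma one_le_posEig_of_trace_eq_zero (htr : A.trace = 0) (hA0 : A ≠ 0) : 1 ≤ posEig hA := by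
  obtain ⟨i, hi⟩ : ∃ i, 0 < hA.eigenvalues i := by
    by_contra! hle
    have hsum : ∑ i, hA.eigenvalues i = 0 := by simpa [hA.trace_eq_sum_eigenvalues] using htr
    rw [Finset.sum_eq_zero_iff_of_nonpos fun i _ => hle i] at hsum
    exact hA0 (hA.eigenvalues_eq_zero_iff.mp (funext fun i => hsum i (Finset.mem_univ i)))
  have : Nonempty {i : Fin n // 0 < hA.eigenvalues i} := ⟨⟨i, hi⟩⟩
  exact Nat.one_le_iff_ne_zero.mpr (Nat.card_ne_zero.mpr ⟨this, inferInstance⟩)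

-- The coordinates along the eigenvectors of negative eigenvalue are injective on such a subspace.
lemma finrank_le_negEig (W : Submodule ℝ (Fin n → ℝ))
    (hW : ∀ x ∈ W, x ≠ 0 → x ⬝ᵥ A *ᵥ x < 0) : Module.finrank ℝ W ≤ negEig hA := by
  let g : W →ₗ[ℝ] ({i : Fin n // hA.eigenvalues i < 0} → ℝ) :=
    LinearMap.funLeft ℝ ℝ Subtype.val ∘ₗ
      mulVecLin (star (hA.eigenvectorUnitary : Matrix (Fin n) (Fin n) ℝ)) ∘ₗ W.subtype
  have hg : Function.Injective g := by
    rw [← LinearMap.ker_eq_bot, LinearMap.ker_eq_bot']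
    intro x hx
    by_contra hx0
    have hneg := hW x x.2 (by simpa using hx0)
    rw [hA.dotProduct_mulVec_eq_sum_eigenvalues] at hneg
    refine hneg.not_ge (Finset.sum_nonneg fun i _ => ?_)
    by_cases hi : hA.eigenvalues i < 0
    · have : (star (hA.eigenvectorUnitary : Matrix (Fin n) (Fin n) ℝ) *ᵥ x) i = 0 :=
        congrFun hx ⟨i, hi⟩
      simp [this]
    · exact mul_nonneg (not_lt.mp hi) (sq_nonneg _)
  simpa [Module.finrank_fintype_fun_eq_card, Nat.card_eq_fintype_card, negEig] using
    LinearMap.finrank_le_finrank_of_injective hg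

lemma inertia_eq_of_neg_on_sum_eq_zero (hpos : 1 ≤ posEig hA)
    (hneg : ∀ x : Fin n → ℝ, x ≠ 0 → ∑ i, x i = 0 → x ⬝ᵥ A *ᵥ x < 0) :
    posEig hA = 1 ∧ zeroEig hA = 0 ∧ negEig hA = n - 1 := by
  let σ : (Fin n → ℝ) →ₗ[ℝ] ℝ := LinearMap.lsum ℝ (fun _ => ℝ) ℝ fun _ => LinearMap.id
  have hσ : ∀ x, σ x = ∑ i, x i := fun x => by simp [σ]
  have hker : n - 1 ≤ Module.finrank ℝ (LinearMap.ker σ) := by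
    have := LinearMap.finrank_range_add_finrank_ker σ
    have := Submodule.finrank_le (LinearMap.range σ)
    simp only [Module.finrank_fin_fun, Module.finrank_self] at *
    omega
  have hW := finrank_le_negEig hA (LinearMap.ker σ) fun x hx hx0 => hneg x hx0 (by
    rwa [LinearMap.mem_ker, hσ] at hx)
  have := posEig_add_zeroEig_add_negEig hA
  omega

end Inertia

lemma sq_add_sub_lt_four_mul_of_triangle {p q δ : ℝ} (hp : 0 < p) (hq : 0 < q) (hδ : 0 < δ)
    (hpq : p ≤ q + δ) (hqp : q ≤ p + δ) (hδpq : δ ≤ p + q) : (p + q - δ) ^ 2 < 4 * p * q := by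
  nlinarith [mul_nonneg (sub_nonneg.2 hpq) (sub_nonneg.2 hqp), mul_nonneg hδ.le (sub_nonneg.2 hδpq),
    mul_pos hp hq]

lemma sum_mul_sq_add_mul_pos {ι : Type*} [Fintype ι] {u x : ι → ℝ} {a b : ι} {s : ℝ}
    (hab : a ≠ b) (hu : ∀ i, 0 ≤ u i) (hs : s ^ 2 < 4 * u a * u b)
    (hx : ∃ i, 0 < u i ∧ x i ≠ 0) : 0 < ∑ i, u i * x i ^ 2 + s * (x a * x b) := by
  classical
  obtain ⟨i, hui, hxi⟩ := hx
  have hterm : ∀ j, 0 ≤ u j * x j ^ 2 := fun j => mul_nonneg (hu j) (sq_nonneg _)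
  by_cases hxab : x a * x b = 0
  · rw [hxab, mul_zero, add_zero]
    exact Finset.sum_pos' (fun j _ => hterm j) ⟨i, Finset.mem_univ _, by positivity⟩
  · have hpair : u a * x a ^ 2 + u b * x b ^ 2 ≤ ∑ j, u j * x j ^ 2 := by
      simpa [Finset.sum_pair hab] using
        Finset.sum_le_sum_of_subset_of_nonneg (Finset.subset_univ {a, b}) fun j _ _ => hterm j
    have hua : 0 < u a := by nlinarith [hu a, hu b, sq_nonneg s]
    have hxb : 0 < x b ^ 2 := by positivity [right_ne_zero_of_mul hxab]
    -- `4 u_a (u_a x_a² + u_b x_b² + s x_a x_b) = (2 u_a x_a + s x_b)² + (4 u_a u_b - s²) x_b²`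
    nlinarith [sq_nonneg (2 * u a * x a + s * x b), mul_pos (sub_pos.2 hs) hxb]

lemma exists_ne_apply_ne_zero_of_sum_eq_zero {ι : Type*} [Fintype ι] [DecidableEq ι]
    {x : ι → ℝ} (hx : x ≠ 0) (hsum : ∑ i, x i = 0) (c : ι) : ∃ i ≠ c, x i ≠ 0 := by
  by_contra! h
  have hc : x c = 0 := by rwa [Fintype.sum_eq_single c h] at hsum
  exact hx (funext fun i => if hi : i = c then hi ▸ hc else h i hi)

section WeightedDistance

variable {V : Type*} {G : SimpleGraph V} {w : Sym2 V → ℝ}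

@[simp]
lemma walkWeight_nil {u : V} : walkWeight w (SimpleGraph.Walk.nil : G.Walk u u) = 0 := by
  simp [walkWeight]

@[simp]
lemma walkWeight_cons {u v x : V} (h : G.Adj u v) (p : G.Walk v x) :
    walkWeight w (SimpleGraph.Walk.cons h p) = w s(u, v) + walkWeight w p := by
  simp [walkWeight]

@[simp]
lemma walkWeight_append {u v x : V} (p : G.Walk u v) (q : G.Walk v x) :
    walkWeight w (p.append q) = walkWeight w p + walkWeight w q := by
  simp [walkWeight, SimpleGraph.Walk.edges_append]

@[simp]
lemma walkWeight_reverse {u v : V} (p : G.Walk u v) :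
    walkWeight w p.reverse = walkWeight w p := by
  simp [walkWeight, SimpleGraph.Walk.edges_reverse, List.sum_reverse]

lemma exists_walkWeight_le_min {u v : V} (p q : G.Walk u v) :
    ∃ r : G.Walk u v, walkWeight w r ≤ min (walkWeight w p) (walkWeight w q) := by
  rcases le_total (walkWeight w p) (walkWeight w q) with h | h
  · exact ⟨p, by simp [h]⟩
  · exact ⟨q, by simp [h]⟩

lemma le_walkWeight_of_triangle (d : V → V → ℝ) (hd : ∀ v, d v v = 0)
    (htri : ∀ u v x, d u x ≤ d u v + d v x) (hedge : ∀ u v, G.Adj u v → d u v ≤ w s(u, v))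
    {u v : V} (p : G.Walk u v) : d u v ≤ walkWeight w p := by
  induction p with
  | nil => simp [hd]
  | @cons u v x h p ih =>
    rw [walkWeight_cons]
    linarith [htri u v x, hedge u v h]

lemma wdist_eq_of_triangle (d : V → V → ℝ) (hd : ∀ v, d v v = 0)
    (htri : ∀ u v x, d u x ≤ d u v + d v x) (hedge : ∀ u v, G.Adj u v → d u v ≤ w s(u, v))
    (hwalk : ∀ u v, ∃ p : G.Walk u v, walkWeight w p ≤ d u v) (u v : V) :
    wdist G w u v = d u v := by
  have hlow : d u v ∈ lowerBounds {x | ∃ p : G.Walk u v, walkWeight w p = x} := by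
    rintro _ ⟨q, rfl⟩
    exact le_walkWeight_of_triangle d hd htri hedge q
  obtain ⟨p, hp⟩ := hwalk u v
  exact le_antisymm ((csInf_le ⟨_, hlow⟩ ⟨p, rfl⟩).trans hp) (le_csInf ⟨_, p, rfl⟩ hlow)

end WeightedDistance

section PairDist

variable {V : Type*} [DecidableEq V] (u : V → ℝ) (a b : V) (δ : ℝ)

def pairDist (i j : V) : ℝ :=
  if i = j then 0 else if s(i, j) = s(a, b) then δ else u i + u j

variable {u a b δ}

lemma pairDist_self (i : V) : pairDist u a b δ i i = 0 := if_pos rfl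

lemma pairDist_triangle (hu : ∀ i, 0 ≤ u i) (ha : u a ≤ u b + δ) (hb : u b ≤ u a + δ)
    (hδ : δ ≤ u a + u b) (i j k : V) :
    pairDist u a b δ i k ≤ pairDist u a b δ i j + pairDist u a b δ j k := by
  have := hu i; have := hu j; have := hu k
  simp only [pairDist, Sym2.eq_iff]
  split_ifs <;> grind

variable [Fintype V]

lemma dotProduct_pairDist_mulVec (hab : a ≠ b) (x : V → ℝ) (hx : ∑ i, x i = 0) :
    x ⬝ᵥ of (pairDist u a b δ) *ᵥ x =
      -2 * (∑ i, u i * x i ^ 2 + (u a + u b - δ) * (x a * x b)) := by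
  have hterm : ∀ i j, x i * (pairDist u a b δ i j * x j) =
      x i * u i * x j + x i * (u j * x j) - (if i = j then 2 * (u i * x i ^ 2) else 0)
        - (if i = a ∧ j = b then (u a + u b - δ) * (x a * x b) else 0)
        - (if i = b ∧ j = a then (u a + u b - δ) * (x a * x b) else 0) := by
    intro i j
    simp only [pairDist, Sym2.eq_iff]
    split_ifs <;> grind
  simp only [dotProduct, mulVec, of_apply, Finset.mul_sum, hterm, Finset.sum_sub_distrib,
    Finset.sum_add_distrib]
  simp only [← Finset.mul_sum, ← Finset.sum_mul, hx, mul_zero, zero_mul, Finset.sum_const_zero,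
    ite_and, Finset.sum_ite_irrel, Finset.sum_ite_eq', Finset.sum_ite_eq, Finset.mem_univ, if_true]
  ring

lemma dotProduct_pairDist_mulVec_neg (hab : a ≠ b) (hu : ∀ i, 0 ≤ u i) (hua : 0 < u a)
    (hub : 0 < u b) (hδ_pos : 0 < δ) (ha : u a ≤ u b + δ) (hb : u b ≤ u a + δ)
    (hδ : δ ≤ u a + u b)
    (x : V → ℝ) (hx : ∑ i, x i = 0) (hxu : ∃ i, 0 < u i ∧ x i ≠ 0) :
    x ⬝ᵥ of (pairDist u a b δ) *ᵥ x < 0 := by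
  rw [dotProduct_pairDist_mulVec hab x hx]
  have := sum_mul_sq_add_mul_pos hab hu
    (sq_add_sub_lt_four_mul_of_triangle hua hub hδ_pos ha hb hδ) hxu
  linarith

end PairDist

section StarPlusEdge

variable {V : Type*} (c a b : V)

def starPlusEdge : SimpleGraph V where
  Adj i j := i ≠ j ∧ (i = c ∨ j = c ∨ s(i, j) = s(a, b))
  symm := ⟨fun i j h => ⟨h.1.symm, by rw [Sym2.eq_swap]; tauto⟩⟩
  loopless := ⟨fun i h => h.1 rfl⟩

variable {c a b}

lemma starPlusEdge_adj_center {x : V} (hx : x ≠ c) : (starPlusEdge c a b).Adj c x :=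
  ⟨hx.symm, Or.inl rfl⟩

lemma starPlusEdge_adj_chord (hab : a ≠ b) : (starPlusEdge c a b).Adj a b :=
  ⟨hab, Or.inr (Or.inr rfl)⟩

variable (c a b) (w : Sym2 V → ℝ)

def chordDist : ℝ := min (w s(a, b)) (w s(c, a) + w s(c, b))

variable {c a b w}

lemma chordDist_pos (hab : a ≠ b) (hac : a ≠ c) (hbc : b ≠ c)
    (hw : ∀ e ∈ (starPlusEdge c a b).edgeSet, 0 < w e) : 0 < chordDist c a b w := by
  have := hw s(a, b) (starPlusEdge_adj_chord hab)
  have := hw s(c, a) (starPlusEdge_adj_center hac)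
  have := hw s(c, b) (starPlusEdge_adj_center hbc)
  unfold chordDist; positivity

lemma exists_walk_chord_le (hab : a ≠ b) (hac : a ≠ c) (hbc : b ≠ c) :
    ∃ p : (starPlusEdge c a b).Walk a b, walkWeight w p ≤ chordDist c a b w := by
  obtain ⟨p, hp⟩ := exists_walkWeight_le_min (w := w) (.cons (starPlusEdge_adj_chord hab) .nil)
    (.cons (starPlusEdge_adj_center hac).symm (.cons (starPlusEdge_adj_center hbc) .nil))
  exact ⟨p, hp.trans_eq (by simp [chordDist, Sym2.eq_swap])⟩

variable [DecidableEq V] (c a b w)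

def centerDist (i : V) : ℝ :=
  if i = c then 0
  else if i = a then min (w s(c, a)) (w s(c, b) + w s(a, b))
  else if i = b then min (w s(c, b)) (w s(c, a) + w s(a, b))
  else w s(c, i)

variable {c a b w}

lemma centerDist_self : centerDist c a b w c = 0 := if_pos rfl

lemma centerDist_left (hac : a ≠ c) :
    centerDist c a b w a = min (w s(c, a)) (w s(c, b) + w s(a, b)) := by
  simp [centerDist, hac]

lemma centerDist_right (hab : a ≠ b) (hbc : b ≠ c) :
    centerDist c a b w b = min (w s(c, b)) (w s(c, a) + w s(a, b)) := by
  simp [centerDist, hbc, hab.symm]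

lemma centerDist_le {x : V} (hx : x ≠ c) : centerDist c a b w x ≤ w s(c, x) := by
  unfold centerDist
  split_ifs with h₁ h₂ h₃
  · exact absurd h₁ hx
  · exact h₂ ▸ min_le_left _ _
  · exact h₃ ▸ min_le_left _ _
  · exact le_rfl

lemma centerDist_pos (hab : a ≠ b) (hac : a ≠ c) (hbc : b ≠ c)
    (hw : ∀ e ∈ (starPlusEdge c a b).edgeSet, 0 < w e) {x : V} (hx : x ≠ c) :
    0 < centerDist c a b w x := by
  have hwc : ∀ y, y ≠ c → 0 < w s(c, y) := fun y hy => hw s(c, y) (starPlusEdge_adj_center hy)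
  have ht : 0 < w s(a, b) := hw s(a, b) (starPlusEdge_adj_chord hab)
  unfold centerDist
  split_ifs with h₁ h₂ h₃
  · exact absurd h₁ hx
  · have := hwc a hac; have := hwc b hbc; positivity
  · have := hwc a hac; have := hwc b hbc; positivity
  · exact hwc x hx

lemma centerDist_nonneg (hab : a ≠ b) (hac : a ≠ c) (hbc : b ≠ c)
    (hw : ∀ e ∈ (starPlusEdge c a b).edgeSet, 0 < w e) (x : V) : 0 ≤ centerDist c a b w x := by
  rcases eq_or_ne x c with rfl | hx
  · exact centerDist_self.ge
  · exact (centerDist_pos hab hac hbc hw hx).le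

lemma centerDist_chordDist_triangle (hab : a ≠ b) (hac : a ≠ c) (hbc : b ≠ c)
    (hw : ∀ e ∈ (starPlusEdge c a b).edgeSet, 0 < w e) :
    centerDist c a b w a ≤ centerDist c a b w b + chordDist c a b w ∧
    centerDist c a b w b ≤ centerDist c a b w a + chordDist c a b w ∧
    chordDist c a b w ≤ centerDist c a b w a + centerDist c a b w b := by
  have := hw s(a, b) (starPlusEdge_adj_chord hab)
  have := hw s(c, a) (starPlusEdge_adj_center hac)
  have := hw s(c, b) (starPlusEdge_adj_center hbc)
  rw [centerDist_left hac, centerDist_right hab hbc, chordDist]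
  refine ⟨?_, ?_, ?_⟩ <;> simp only [min_def] <;> split_ifs <;> linarith

lemma exists_walk_center_le (hab : a ≠ b) (hac : a ≠ c) (hbc : b ≠ c) (x : V) :
    ∃ p : (starPlusEdge c a b).Walk c x, walkWeight w p ≤ centerDist c a b w x := by
  have hba : (starPlusEdge c a b).Adj b a := (starPlusEdge_adj_chord hab).symm
  rcases eq_or_ne x c with rfl | hxc
  · exact ⟨.nil, by simp [centerDist_self]⟩
  by_cases hxa : x = a
  · subst hxa
    obtain ⟨p, hp⟩ := exists_walkWeight_le_min (w := w)
      (.cons (starPlusEdge_adj_center hac) .nil)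
      (.cons (starPlusEdge_adj_center hbc) (.cons hba .nil))
    exact ⟨p, hp.trans_eq (by simp [centerDist_left hac, Sym2.eq_swap])⟩
  by_cases hxb : x = b
  · subst hxb
    obtain ⟨p, hp⟩ := exists_walkWeight_le_min (w := w)
      (.cons (starPlusEdge_adj_center hbc) .nil)
      (.cons (starPlusEdge_adj_center hac) (.cons (starPlusEdge_adj_chord hab) .nil))
    exact ⟨p, hp.trans_eq (by simp [centerDist_right hab hbc])⟩
  · exact ⟨.cons (starPlusEdge_adj_center hxc) .nil, by simp [centerDist, hxc, hxa, hxb]⟩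

lemma exists_walk_le_pairDist (hab : a ≠ b) (hac : a ≠ c) (hbc : b ≠ c) (i j : V) :
    ∃ p : (starPlusEdge c a b).Walk i j,
      walkWeight w p ≤ pairDist (centerDist c a b w) a b (chordDist c a b w) i j := by
  obtain ⟨q, hq⟩ := exists_walk_chord_le (w := w) hab hac hbc
  obtain ⟨pi, hpi⟩ := exists_walk_center_le (w := w) hab hac hbc i
  obtain ⟨pj, hpj⟩ := exists_walk_center_le (w := w) hab hac hbc j
  unfold pairDist
  split_ifs with hij hs
  · subst hij; exact ⟨.nil, by simp⟩
  · rcases Sym2.eq_iff.1 hs with ⟨rfl, rfl⟩ | ⟨rfl, rfl⟩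
    · exact ⟨q, hq⟩
    · exact ⟨q.reverse, by simpa using hq⟩
  · exact ⟨pi.reverse.append pj, by simp only [walkWeight_append, walkWeight_reverse]; linarith⟩

lemma pairDist_le_of_adj (hac : a ≠ c) (hbc : b ≠ c) {i j : V}
    (h : (starPlusEdge c a b).Adj i j) :
    pairDist (centerDist c a b w) a b (chordDist c a b w) i j ≤ w s(i, j) := by
  obtain ⟨hij, rfl | rfl | hs⟩ := h
  · simpa [pairDist, hij, Sym2.eq_iff, hac.symm, hbc.symm, centerDist_self] using
      centerDist_le hij.symm
  · simpa [pairDist, hij, Sym2.eq_iff, hac.symm, hbc.symm, centerDist_self, Sym2.eq_swap] using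
      centerDist_le hij
  · simp [pairDist, hij, hs, chordDist]

lemma wdist_starPlusEdge (hab : a ≠ b) (hac : a ≠ c) (hbc : b ≠ c)
    (hw : ∀ e ∈ (starPlusEdge c a b).edgeSet, 0 < w e) (i j : V) :
    wdist (starPlusEdge c a b) w i j =
      pairDist (centerDist c a b w) a b (chordDist c a b w) i j := by
  obtain ⟨h₁, h₂, h₃⟩ := centerDist_chordDist_triangle hab hac hbc hw
  exact wdist_eq_of_triangle _ pairDist_self
    (pairDist_triangle (centerDist_nonneg hab hac hbc hw) h₁ h₂ h₃)
    (fun _ _ => pairDist_le_of_adj hac hbc) (exists_walk_le_pairDist hab hac hbc) i j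

end StarPlusEdge

theorem star_plus_edge_inertia_general (n : ℕ) (G : SimpleGraph (Fin n))
    (c a b : Fin n) (hab : a ≠ b) (hac : a ≠ c) (hbc : b ≠ c)
    (hG : ∀ i j, G.Adj i j ↔ i ≠ j ∧ (i = c ∨ j = c ∨ s(i, j) = s(a, b)))
    (w : Sym2 (Fin n) → ℝ) (hw : ∀ e ∈ G.edgeSet, 0 < w e)
    (hD : (distMatrix G w).IsHermitian) :
    posEig hD = 1 ∧ zeroEig hD = 0 ∧ negEig hD = n - 1 := by
  obtain rfl : G = starPlusEdge c a b := by ext i j; exact hG i j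
  set u := centerDist c a b w
  set δ := chordDist c a b w
  have hDist : distMatrix (starPlusEdge c a b) w = of (pairDist u a b δ) := by
    ext i j; exact wdist_starPlusEdge hab hac hbc hw i j
  have hδ : 0 < δ := chordDist_pos hab hac hbc hw
  obtain ⟨h₁, h₂, h₃⟩ := centerDist_chordDist_triangle hab hac hbc hw
  refine inertia_eq_of_neg_on_sum_eq_zero hD ?_ fun x hx hsum => ?_
  · refine one_le_posEig_of_trace_eq_zero hD (by simp [hDist, trace, pairDist_self])
      fun h0 => hδ.ne' ?_
    simpa [hDist, pairDist, hab] using congrFun (congrFun h0 a) b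
  · obtain ⟨i, hic, hi⟩ := exists_ne_apply_ne_zero_of_sum_eq_zero hx hsum c
    rw [hDist]
    exact dotProduct_pairDist_mulVec_neg hab (centerDist_nonneg hab hac hbc hw)
      (centerDist_pos hab hac hbc hw hac) (centerDist_pos hab hac hbc hw hbc) hδ h₁ h₂ h₃ x hsum
      ⟨i, centerDist_pos hab hac hbc hw hic, hi⟩

/-- A simple star on `n ≥ 4` vertices (center `c`) with one additional
edge between two non-central vertices `a`, `b`, with positive edge weights, has a
strongly unipositive distance matrix: inertia `(1, 0, n-1)`. -/
theorem star_plus_edge_inertia (n : ℕ) (hn : 4 ≤ n) (G : SimpleGraph (Fin n))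
    (c a b : Fin n) (hab : a ≠ b) (hac : a ≠ c) (hbc : b ≠ c)
    (hG : ∀ i j, G.Adj i j ↔ i ≠ j ∧ (i = c ∨ j = c ∨ s(i, j) = s(a, b)))
    (w : Sym2 (Fin n) → ℝ) (hw : ∀ e ∈ G.edgeSet, 0 < w e)
    (hD : (distMatrix G w).IsHermitian) :
    posEig hD = 1 ∧ zeroEig hD = 0 ∧ negEig hD = n - 1 :=
  star_plus_edge_inertia_general n G c a b hab hac hbc hG w hw hD
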